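/- arXiv:2312.14762 — 2 statements merged into one kernel-verified Lean document; each statement's English description precedes it below -/
import Mathlib

section
/- Let G be a two-factor analysis graph with latent nodes h₁, h₂ such that ch(h₁) ∩ ch(h₂) = {j₁, j₂}. Let i₁, i₂ ∈ ch(h₁) \ {j₁, j₂} and k₁, k₂ ∈ ch(h₂) \ {j₁, j₂} be such that i₁, i₂, j₁, j₂, k₁, k₂ are pairwise distinct. Then the hexad σ_{k₁k₂} σ_{i₁i₂} σ_{j₁j₂} − σ_{k₁k₂} σ_{j₁i₂} σ_{j₂i₁} − σ_{i₁i₂} σ_{j₁k₂} σ_{j₂k₁} vanishes for every Σ = Ω + Λ Λᵀ with Λ ∈ ℝ^D and Ω diagonal. -/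
/-!
Off the diagonal, `Ω + Λ Λᵀ` only sees the loadings, so `σ_uv = λ_u₀ λ_v₀ + λ_u₁ λ_v₁`.
The `i`'s load only on `h₁` and the `k`'s only on `h₂`, so every entry of the hexad factors
through the loadings, and `σ_{j₁j₂} = λ_{j₁0} λ_{j₂0} + λ_{j₁1} λ_{j₂1}` splits the first term
into exactly the other two.
-/

open Matrix

theorem Matrix.IsDiag.add_mul_transpose_apply_of_ne {n m R : Type*} [Fintype m]
    [CommSemiring R] {Ω : Matrix n n R} (hΩ : Ω.IsDiag) (Λ : Matrix n m R) {u v : n}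
    (huv : u ≠ v) : (Ω + Λ * Λᵀ) u v = ∑ h, Λ u h * Λ v h := by
  simp only [add_apply, hΩ huv, zero_add, mul_apply, transpose_apply]

theorem Matrix.apply_eq_zero_of_mem_sdiff_inter {p m R : Type*} [DecidableEq p] [Zero R]
    {ch : m → Finset p} {Λ : Matrix p m R} (hsupp : ∀ v h, v ∉ ch h → Λ v h = 0)
    {a b : m} {v : p} (hv : v ∈ ch a \ (ch a ∩ ch b)) : Λ v b = 0 := by
  rw [Finset.mem_sdiff, Finset.mem_inter] at hv
  exact hsupp v b fun hb => hv.2 ⟨hv.1, hb⟩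

theorem stmt_4 (p : ℕ) (ch : Fin 2 → Finset (Fin p))
    (j₁ j₂ i₁ i₂ k₁ k₂ : Fin p)
    (hinter : ch 0 ∩ ch 1 = {j₁, j₂})
    (hi₁ : i₁ ∈ ch 0 \ {j₁, j₂}) (hi₂ : i₂ ∈ ch 0 \ {j₁, j₂})
    (hk₁ : k₁ ∈ ch 1 \ {j₁, j₂}) (hk₂ : k₂ ∈ ch 1 \ {j₁, j₂})
    (hdist : List.Pairwise (· ≠ ·) [i₁, i₂, j₁, j₂, k₁, k₂])
    (Λ : Matrix (Fin p) (Fin 2) ℝ)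
    (hsupp : ∀ v h, v ∉ ch h → Λ v h = 0)
    (Ω : Matrix (Fin p) (Fin p) ℝ) (hΩ : Ω.IsDiag)
    (S : Matrix (Fin p) (Fin p) ℝ) (hS : S = Ω + Λ * Λᵀ) :
    S k₁ k₂ * S i₁ i₂ * S j₁ j₂ - S k₁ k₂ * S j₁ i₂ * S j₂ i₁
      - S i₁ i₂ * S j₁ k₂ * S j₂ k₁ = 0 := by
  simp only [List.pairwise_cons, List.forall_mem_cons, List.not_mem_nil, IsEmpty.forall_iff,
    implies_true, and_true, List.Pairwise.nil] at hdist
  obtain ⟨⟨hi₁i₂, -, hi₁j₂, -, -⟩, ⟨hi₂j₁, -, -, -⟩, ⟨hj₁j₂, -, hj₁k₂⟩, ⟨hj₂k₁, -⟩, hk₁k₂⟩ :=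
    hdist
  have hσ : ∀ u v, u ≠ v → S u v = Λ u 0 * Λ v 0 + Λ u 1 * Λ v 1 := fun u v huv => by
    rw [hS, hΩ.add_mul_transpose_apply_of_ne Λ huv, Fin.sum_univ_two]
  have hexcl₀ : ∀ v ∈ ch 0 \ {j₁, j₂}, Λ v 1 = 0 := fun v hv =>
    apply_eq_zero_of_mem_sdiff_inter hsupp (hinter ▸ hv)
  have hexcl₁ : ∀ v ∈ ch 1 \ {j₁, j₂}, Λ v 0 = 0 := fun v hv =>
    apply_eq_zero_of_mem_sdiff_inter hsupp (Finset.inter_comm (ch 0) (ch 1) ▸ hinter ▸ hv)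
  rw [hσ k₁ k₂ hk₁k₂, hσ i₁ i₂ hi₁i₂, hσ j₁ j₂ hj₁j₂, hσ j₁ i₂ hi₂j₁.symm,
    hσ j₂ i₁ hi₁j₂.symm, hσ j₁ k₂ hj₁k₂, hσ j₂ k₁ hj₂k₁, hexcl₀ i₁ hi₁, hexcl₀ i₂ hi₂,
    hexcl₁ k₁ hk₁, hexcl₁ k₂ hk₂]
  ring
end

section
/- Let Σ be a p×p symmetric matrix over ℂ of rank at most 2 such that: (i) Σ_{V₁,V₃} = 0, (ii) rank(Σ_{V₁, V₁∪V₂}) ≤ 1, (iii) rank(Σ_{V₂∪V₃, V₃}) ≤ 1, for a partition V = V₁ ⊔ V₂ ⊔ V₃ of the index set. If additionally there exists v ∈ V₁ with σ_{vv} ≠ 0 and, setting y_w = σ_{vw}/√σ_{vv} for w ∈ V₂ and y_w = 0 for w ∈ V₃ and A = Σ_{V₂∪V₃, V₂∪V₃} − y yᵀ, there exists u with a_{uu} ≠ 0, then there exists a p×2 matrix Λ over ℂ with Λ_{V₁, 2} = 0 and Λ_{V₃, 1} = 0 such that Σ = Λ Λᵀ. -/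
/-!
Take `λ = Σ_{·v} / √σ_vv` as the first column of `Λ`; it vanishes on `V₃` because `Σ_{V₁,V₃} = 0`.
Removing the pivot `v` from `Σ` lowers its rank (Schur complement), so `B = Σ - λλᵀ` is a
symmetric matrix of rank at most one, hence `B = μμᵀ` with `μ = B_{·u} / √b_uu`, and
`b_uu = a_uu ≠ 0` because `λ` agrees with `y` off `V₁`. Finally `μ` vanishes on `V₁`: for
`u ∈ V₃` this is again `Σ_{V₁,V₃} = 0`, and for `u ∈ V₂` the vanishing of `b_iu` is the
`2 × 2` minor on rows `i, v` and columns `u, v` of the rank-one block `Σ_{V₁, V₁∪V₂}`.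
-/

open Matrix

namespace Matrix

variable {m n K : Type*} [Fintype n] [Field K]

theorem mul_eq_mul_of_rank_le_one {M : Matrix m n K} (h : M.rank ≤ 1) (i k : m) (j l : n) :
    M i j * M k l = M i l * M k j := by
  by_contra hne
  have hunit : IsUnit (M.submatrix ![i, k] ![j, l]) := by
    rw [isUnit_iff_isUnit_det, det_fin_two, isUnit_iff_ne_zero]
    simpa [sub_eq_zero] using hne
  have h2 := rank_of_isUnit _ hunit
  have := M.rank_submatrix_le ![i, k] ![j, l]
  simp only [Fintype.card_fin] at h2
  omega

theorem rank_sub_smul_vecMulVec_lt [DecidableEq n] (S : Matrix m n K) {i : m} {j : n}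
    (hij : S i j ≠ 0) :
    (S - (S i j)⁻¹ • vecMulVec (fun k => S k j) (S i)).rank < S.rank := by
  set B := S - (S i j)⁻¹ • vecMulVec (fun k => S k j) (S i)
  have hcol : (fun k => S k j) = S *ᵥ Pi.single j 1 := by
    ext k; simp
  have hB : ∀ x, B *ᵥ x = S *ᵥ (x - ((S i j)⁻¹ * (S i ⬝ᵥ x)) • Pi.single j 1) := by
    intro x
    rw [sub_mulVec, smul_mulVec, vecMulVec_mulVec, mulVec_sub, mulVec_smul, ← hcol]
    ext k
    simp only [Pi.sub_apply, Pi.smul_apply, smul_eq_mul, MulOpposite.smul_eq_mul_unop,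
      MulOpposite.unop_op]
    ring
  have hBi : ∀ x, (B *ᵥ x) i = 0 := by
    intro x
    rw [hB, mulVec_sub, mulVec_smul, ← hcol]
    change S i ⬝ᵥ x - (S i j)⁻¹ * (S i ⬝ᵥ x) * S i j = 0
    rw [mul_right_comm, inv_mul_cancel₀ hij, one_mul, sub_self]
  have hle : LinearMap.range B.mulVecLin ≤ LinearMap.range S.mulVecLin := by
    rintro _ ⟨x, rfl⟩
    exact ⟨_, (hB x).symm⟩
  have hne : LinearMap.range B.mulVecLin ≠ LinearMap.range S.mulVecLin := by
    intro heq
    obtain ⟨x, hx⟩ : (fun k => S k j) ∈ LinearMap.range B.mulVecLin :=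
      heq ▸ ⟨Pi.single j 1, hcol.symm⟩
    have := hBi x
    rw [← mulVecLin_apply, hx] at this
    exact hij this
  exact Submodule.finrank_lt_finrank_of_lt (lt_of_le_of_ne hle hne)

theorem IsSymm.rank_sub_vecMulVec_div_lt [DecidableEq n] {S : Matrix n n K} (hS : S.IsSymm)
    {v : n} (hv : S v v ≠ 0) {s : K} (hs : s ^ 2 = S v v) :
    (S - vecMulVec (fun i => S i v / s) (fun i => S i v / s)).rank < S.rank := by
  convert S.rank_sub_smul_vecMulVec_lt hv using 3
  ext i j
  rw [vecMulVec_apply, Matrix.smul_apply, vecMulVec_apply, smul_eq_mul, ← hs, hS.apply j v]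
  field_simp

theorem eq_vecMulVec_of_isSymm_of_rank_le_one {M : Matrix n n K} (hM : M.IsSymm)
    (h : M.rank ≤ 1) {u : n} (hu : M u u ≠ 0) {t : K} (ht : t ^ 2 = M u u) :
    M = vecMulVec (fun i => M i u / t) (fun i => M i u / t) := by
  have ht0 : t ≠ 0 := by rintro rfl; exact hu (by simp [← ht])
  ext i j
  rw [vecMulVec_apply, hM.apply u j, div_mul_div_comm, ← sq, ht, eq_div_iff hu]
  exact mul_eq_mul_of_rank_le_one h i u j u

theorem of_pair_mul_transpose {R : Type*} [CommSemiring R] (a b : m → R) :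
    of (fun i => ![a i, b i]) * (of fun i => ![a i, b i])ᵀ = vecMulVec a a + vecMulVec b b := by
  ext i j
  simp [mul_apply, Fin.sum_univ_two, vecMulVec_apply]

end Matrix

theorem stmt_13_general (p : ℕ) (S : Matrix (Fin p) (Fin p) ℂ) (hsym : S.IsSymm)
    (hrk : S.rank ≤ 2)
    (V₁ V₂ V₃ : Finset (Fin p))
    (hzero : ∀ i ∈ V₁, ∀ j ∈ V₃, S i j = 0)
    (hrk1 : (S.submatrix (fun i : V₁ => (i : Fin p))
        (fun j : (V₁ ∪ V₂ : Finset (Fin p)) => (j : Fin p))).rank ≤ 1)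
    (v : Fin p) (hv : v ∈ V₁) (hvv : S v v ≠ 0)
    (s : ℂ) (hs : s ^ 2 = S v v)
    (y : Fin p → ℂ)
    (hy2 : ∀ w ∈ V₂, y w = S v w / s) (hy3 : ∀ w ∈ V₃, y w = 0)
    (A : Matrix (Fin p) (Fin p) ℂ) (hAdef : ∀ i j, A i j = S i j - y i * y j)
    (u : Fin p) (hu : u ∈ V₂ ∪ V₃) (huu : A u u ≠ 0) :
    ∃ Λ : Matrix (Fin p) (Fin 2) ℂ,
      (∀ i ∈ V₁, Λ i 1 = 0) ∧ (∀ i ∈ V₃, Λ i 0 = 0) ∧ S = Λ * Λᵀ := by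
  set lam : Fin p → ℂ := fun i => S i v / s
  set B := S - vecMulVec lam lam
  have hBrk : B.rank ≤ 1 :=
    Nat.lt_succ_iff.mp ((hsym.rank_sub_vecMulVec_div_lt hvv hs).trans_le hrk)
  have hlam3 : ∀ i ∈ V₃, lam i = 0 := fun i hi => by
    simp [lam, hsym.apply v i, hzero v hv i hi]
  have hBuu : B u u = A u u := by
    have hlam_y : lam u = y u := by
      rcases Finset.mem_union.mp hu with hu2 | hu3
      · rw [hy2 u hu2, ← hsym.apply v u]
      · rw [hy3 u hu3, hlam3 u hu3]
    simp [B, hAdef, vecMulVec_apply, hlam_y]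
  have hB1 : ∀ i ∈ V₁, B i u = 0 := by
    intro i hi
    rcases Finset.mem_union.mp hu with hu2 | hu3
    · have hminor := mul_eq_mul_of_rank_le_one hrk1 ⟨i, hi⟩ ⟨v, hv⟩
        ⟨u, Finset.mem_union_right _ hu2⟩ ⟨v, Finset.mem_union_left _ hv⟩
      simp only [submatrix_apply] at hminor
      change S i u - S i v / s * (S u v / s) = 0
      rw [← hsym.apply u v, div_mul_div_comm, ← sq, hs, ← hminor, mul_div_cancel_right₀ _ hvv,
        sub_self]
    · simp [B, vecMulVec_apply, hzero i hi u hu3, hlam3 u hu3]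
  obtain ⟨t, ht⟩ := IsAlgClosed.exists_pow_nat_eq (B u u) two_pos
  have hBsym : B.IsSymm := hsym.sub (transpose_vecMulVec lam lam)
  refine ⟨of fun i => ![lam i, B i u / t], fun i hi => by simp [hB1 i hi],
    fun i hi => by simp [hlam3 i hi], ?_⟩
  rw [of_pair_mul_transpose, ← eq_vecMulVec_of_isSymm_of_rank_le_one hBsym hBrk (hBuu ▸ huu) ht]
  exact (add_sub_cancel _ _).symm

theorem stmt_13 (p : ℕ) (S : Matrix (Fin p) (Fin p) ℂ) (hsym : S.IsSymm)
    (hrk : S.rank ≤ 2)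
    (V₁ V₂ V₃ : Finset (Fin p))
    (h12 : Disjoint V₁ V₂) (h13 : Disjoint V₁ V₃) (h23 : Disjoint V₂ V₃)
    (hunion : V₁ ∪ V₂ ∪ V₃ = Finset.univ)
    (hzero : ∀ i ∈ V₁, ∀ j ∈ V₃, S i j = 0)
    (hrk1 : (S.submatrix (fun i : V₁ => (i : Fin p))
        (fun j : (V₁ ∪ V₂ : Finset (Fin p)) => (j : Fin p))).rank ≤ 1)
    (hrk2 : (S.submatrix (fun i : (V₂ ∪ V₃ : Finset (Fin p)) => (i : Fin p))
        (fun j : V₃ => (j : Fin p))).rank ≤ 1)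
    (v : Fin p) (hv : v ∈ V₁) (hvv : S v v ≠ 0)
    (s : ℂ) (hs : s ^ 2 = S v v)
    (y : Fin p → ℂ)
    (hy2 : ∀ w ∈ V₂, y w = S v w / s) (hy3 : ∀ w ∈ V₃, y w = 0)
    (A : Matrix (Fin p) (Fin p) ℂ) (hAdef : ∀ i j, A i j = S i j - y i * y j)
    (u : Fin p) (hu : u ∈ V₂ ∪ V₃) (huu : A u u ≠ 0) :
    ∃ Λ : Matrix (Fin p) (Fin 2) ℂ,
      (∀ i ∈ V₁, Λ i 1 = 0) ∧ (∀ i ∈ V₃, Λ i 0 = 0) ∧ S = Λ * Λᵀ :=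
  stmt_13_general p S hsym hrk V₁ V₂ V₃ hzero hrk1 v hv hvv s hs y hy2 hy3 A hAdef u hu huu
end
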